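/- arXiv:1408.2639 — 4 statements merged into one kernel-verified Lean document; each statement's English description precedes it below -/
import Mathlib

section
/- If G is a circular-arc graph with no universal vertices and no true twins, then G contains no anchored invertible pair. -/
/-!
Graphs here are finite, undirected, without parallel edges, and have a loop at
every vertex.  We model them as symmetric reflexive relations.
-/

structure LoopGraph (V : Type) where
  Adj : V → V → Prop
  symm : ∀ u v, Adj u v → Adj v u
  refl : ∀ u, Adj u u

namespace LoopGraph

variable {V W : Type}

/-- Closed neighbourhood `N[u]`. -/
def nbhd (G : LoopGraph V) (u : V) : Set V := {v | G.Adj u v}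

/-- `u` is a universal vertex. -/
def Universal (G : LoopGraph V) (u : V) : Prop := ∀ v, G.Adj u v

/-- `u ≠ v` are true twins if `N[u] = N[v]`. -/
def TrueTwins (G : LoopGraph V) (u v : V) : Prop := u ≠ v ∧ G.nbhd u = G.nbhd v

/-- `uv` is an inclusion edge: it is an edge and `N[u] ⊆ N[v]` or `N[v] ⊆ N[u]`. -/
def InclusionEdge (G : LoopGraph V) (u v : V) : Prop :=
  G.Adj u v ∧ (G.nbhd u ⊆ G.nbhd v ∨ G.nbhd v ⊆ G.nbhd u)

/-- `u` overlaps `v`: they are adjacent and their closed neighbourhoods are incomparable. -/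
def Overlaps (G : LoopGraph V) (u v : V) : Prop :=
  G.Adj u v ∧ ¬ G.nbhd u ⊆ G.nbhd v ∧ ¬ G.nbhd v ⊆ G.nbhd u

/-- `{u,v}` is a spanning pair. -/
def SpanningPair (G : LoopGraph V) (u v : V) : Prop :=
  (∀ x, ¬ G.Adj v x → G.nbhd x ⊆ G.nbhd u) ∧
  (∀ y, ¬ G.Adj u y → G.nbhd y ⊆ G.nbhd v)

/-- `uv` is a 2-overlap edge: an overlap edge forming a spanning pair. -/
def TwoOverlapEdge (G : LoopGraph V) (u v : V) : Prop :=
  G.Overlaps u v ∧ G.SpanningPair u v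

/-- `uv` is a 1-overlap edge: an overlap edge not forming a spanning pair. -/
def OneOverlapEdge (G : LoopGraph V) (u v : V) : Prop :=
  G.Overlaps u v ∧ ¬ G.SpanningPair u v

/-- `{u,v}` is a circular pair: a non-adjacent spanning pair. -/
def CircularPair (G : LoopGraph V) (u v : V) : Prop :=
  G.SpanningPair u v ∧ ¬ G.Adj u v

/-- Every vertex belongs to some circular pair. -/
def CircularlyPaired (G : LoopGraph V) : Prop := ∀ u, ∃ v, G.CircularPair u v

/-- A walk with `k` edges: vertices `P 0, …, P k` with consecutive vertices adjacent. -/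
def IsWalk (G : LoopGraph V) (k : ℕ) (P : ℕ → V) : Prop :=
  ∀ i < k, G.Adj (P i) (P (i + 1))

/-- Vertex `z` avoids the edge `ab`: every neighbour of `z` among `a, b` overlaps `z`,
and if `z` overlaps both `a` and `b` then `a, b` do not overlap each other. -/
def AvoidsEdge (G : LoopGraph V) (z a b : V) : Prop :=
  (G.Adj z a → G.Overlaps z a) ∧ (G.Adj z b → G.Overlaps z b) ∧
  (G.Overlaps z a → G.Overlaps z b → ¬ G.Overlaps a b)

/-- Vertex `z` and the walk `P` (with `k` edges) avoid each other. -/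
def AvoidsWalk (G : LoopGraph V) (z : V) (k : ℕ) (P : ℕ → V) : Prop :=
  (∀ i ≤ k, G.Adj z (P i) → G.Overlaps z (P i)) ∧
  (∀ i < k, G.Overlaps z (P i) → G.Overlaps z (P (i + 1)) →
    ¬ G.Overlaps (P i) (P (i + 1)))

/-- The walks `P` and `Q` (both with `k` edges) avoid each other. -/
def WalksAvoid (G : LoopGraph V) (k : ℕ) (P Q : ℕ → V) : Prop :=
  ∀ i < k, G.AvoidsEdge (P i) (Q i) (Q (i + 1)) ∧ G.AvoidsEdge (Q (i + 1)) (P i) (P (i + 1))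

/-- `{x,y}` is a `z`-invertible pair, i.e. an invertible pair anchored at `z`. -/
def ZInvertiblePair (G : LoopGraph V) (z x y : V) : Prop :=
  x ≠ y ∧ x ≠ z ∧ y ≠ z ∧
  ∃ k, ∃ P Q : ℕ → V, G.IsWalk k P ∧ G.IsWalk k Q ∧
    P 0 = x ∧ P k = y ∧ Q 0 = y ∧ Q k = x ∧
    G.WalksAvoid k P Q ∧ G.AvoidsWalk z k P ∧ G.AvoidsWalk z k Q

/-- `G` contains an anchored invertible pair. -/
def HasAnchoredInvertiblePair (G : LoopGraph V) : Prop :=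
  ∃ z x y, G.ZInvertiblePair z x y

end LoopGraph

/-!
Circular arcs: the circle is modelled as the half-open interval `[0,1)`;
an arc is described by its left and right endpoints (clockwise = increasing),
wrapping around if necessary.
-/

/-- Membership of the point `t` in the clockwise arc from `l` to `r`. -/
def arcMem (l r t : ℝ) : Prop :=
  (l ≤ r ∧ l ≤ t ∧ t ≤ r) ∨ (r < l ∧ (l ≤ t ∨ t ≤ r))

/-- The arc `[l₁,r₁]` is contained in the arc `[l₂,r₂]`. -/
def arcSubset (l₁ r₁ l₂ r₂ : ℝ) : Prop :=
  ∀ t ∈ Set.Ico (0 : ℝ) 1, arcMem l₁ r₁ t → arcMem l₂ r₂ t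

/-- The arc `[lu,ru]` properly contains the arc `[lv,rv]`. -/
def arcProperContains (lu ru lv rv : ℝ) : Prop :=
  arcSubset lv rv lu ru ∧ ¬ arcSubset lu ru lv rv

/-- The arcs `[lu,ru]` and `[lv,rv]` together cover the whole circle. -/
def arcsCover (lu ru lv rv : ℝ) : Prop :=
  ∀ t ∈ Set.Ico (0 : ℝ) 1, arcMem lu ru t ∨ arcMem lv rv t

/-- `b` lies strictly between `a` and `c` in the clockwise cyclic order on `[0,1)`. -/
def cycBtw (a b c : ℝ) : Prop :=
  (a < b ∧ b < c) ∨ (b < c ∧ c < a) ∨ (c < a ∧ a < b)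

/-- The four points `a, b, c, d` of `[0,1)` occur in this clockwise cyclic order. -/
def cyc4 (a b c d : ℝ) : Prop := cycBtw a b c ∧ cycBtw a c d

namespace LoopGraph

variable {V W : Type}

/-- `(l, r)` is a circular-arc representation of `G`: all endpoints are distinct and
two vertices are adjacent iff their arcs intersect. -/
def IsCARep (G : LoopGraph V) (l r : V → ℝ) : Prop :=
  (∀ v, l v ∈ Set.Ico (0 : ℝ) 1) ∧ (∀ v, r v ∈ Set.Ico (0 : ℝ) 1) ∧
  Function.Injective (Sum.elim l r) ∧
  ∀ u v, (G.Adj u v ↔ ∃ t ∈ Set.Ico (0 : ℝ) 1,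
    arcMem (l u) (r u) t ∧ arcMem (l v) (r v) t)

/-- `G` is a circular-arc graph. -/
def IsCircularArc (G : LoopGraph V) : Prop := ∃ l r : V → ℝ, G.IsCARep l r

/-- A normalized circular-arc representation of `G`. -/
def IsNormalizedRep (G : LoopGraph V) (l r : V → ℝ) : Prop :=
  G.IsCARep l r ∧
  ∀ u v, G.Adj u v → u ≠ v →
    (arcProperContains (l u) (r u) (l v) (r v) ↔ G.nbhd v ⊆ G.nbhd u) ∧
    (arcsCover (l u) (r u) (l v) (r v) ↔ G.TwoOverlapEdge u v)

/-- A circular-arc representation of the induced subgraph `G[X]` which is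
normalized with respect to `G`. -/
def IsNormalizedRepOn (G : LoopGraph V) (X : Set V) (l r : V → ℝ) : Prop :=
  (∀ v ∈ X, l v ∈ Set.Ico (0 : ℝ) 1) ∧ (∀ v ∈ X, r v ∈ Set.Ico (0 : ℝ) 1) ∧
  Set.InjOn l X ∧ Set.InjOn r X ∧ (∀ u ∈ X, ∀ v ∈ X, l u ≠ r v) ∧
  (∀ u ∈ X, ∀ v ∈ X,
    (G.Adj u v ↔ ∃ t ∈ Set.Ico (0 : ℝ) 1,
      arcMem (l u) (r u) t ∧ arcMem (l v) (r v) t)) ∧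
  (∀ u ∈ X, ∀ v ∈ X, G.Adj u v → u ≠ v →
    (arcProperContains (l u) (r u) (l v) (r v) ↔ G.nbhd v ⊆ G.nbhd u) ∧
    (arcsCover (l u) (r u) (l v) (r v) ↔ G.TwoOverlapEdge u v))

/-! Circular completions. -/

/-- `f` exhibits `G` as an induced subgraph of `H`. -/
def InducedEmb (G : LoopGraph V) (H : LoopGraph W) (f : V → W) : Prop :=
  Function.Injective f ∧ ∀ u v, (G.Adj u v ↔ H.Adj (f u) (f v))

/-- Every edge of `G` has the same type (inclusion / 1-overlap / 2-overlap)
in `G` and in `H`. -/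
def SameEdgeTypes (G : LoopGraph V) (H : LoopGraph W) (f : V → W) : Prop :=
  ∀ u v, G.Adj u v →
    ((G.InclusionEdge u v ↔ H.InclusionEdge (f u) (f v)) ∧
     (G.OneOverlapEdge u v ↔ H.OneOverlapEdge (f u) (f v)) ∧
     (G.TwoOverlapEdge u v ↔ H.TwoOverlapEdge (f u) (f v)))

/-- `H` (with embedding `f`) is a circular completion of `G`: a circularly-paired
graph with the fewest possible vertices containing `G` as an induced subgraph with
all edge types preserved. -/
def IsCircularCompletion (G : LoopGraph V) (H : LoopGraph W) (f : V → W) : Prop :=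
  Finite W ∧ G.InducedEmb H f ∧ G.SameEdgeTypes H f ∧ H.CircularlyPaired ∧
  ∀ (W' : Type) (H' : LoopGraph W') (f' : V → W'), Finite W' →
    G.InducedEmb H' f' → G.SameEdgeTypes H' f' → H'.CircularlyPaired →
    Nat.card W ≤ Nat.card W'

/-! The anchored Δ-knotting graph. -/

/-- `A(z)`: vertices nonadjacent to `z` or overlapping `z`. -/
def Aset (G : LoopGraph V) (z : V) : Set V := {u | ¬ G.Adj z u ∨ G.Overlaps z u}

/-- `x` and `y` are `uz`-connected. -/
def UZConnected (G : LoopGraph V) (u z x y : V) : Prop :=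
  ¬ G.InclusionEdge x u ∧ ¬ G.InclusionEdge y u ∧ ¬ G.InclusionEdge x z ∧
  ¬ G.InclusionEdge y z ∧ ¬ G.InclusionEdge u z ∧
  ∃ k, ∃ P : ℕ → V, G.IsWalk k P ∧ P 0 = x ∧ P k = y ∧
    G.AvoidsWalk u k P ∧ G.AvoidsWalk z k P

/-- `X` is a `uz`-component: a maximal set of pairwise `uz`-connected vertices. -/
def IsUZComponent (G : LoopGraph V) (u z : V) (X : Set V) : Prop :=
  X.Nonempty ∧ (∀ x ∈ X, ∀ y ∈ X, G.UZConnected u z x y) ∧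
  ∀ Y : Set V, X ⊆ Y → (∀ x ∈ Y, ∀ y ∈ Y, G.UZConnected u z x y) → Y = X

/-- Vertices of the `z`-anchored Δ-knotting graph: copies `(u, X)` of `u ∈ A(z)`,
one for each `uz`-component `X`. -/
def KnotVertex (G : LoopGraph V) (z : V) (p : V × Set V) : Prop :=
  p.1 ∈ G.Aset z ∧ G.IsUZComponent p.1 z p.2

/-- Edges of the `z`-anchored Δ-knotting graph: for each edge `uv` of `G` with
`u, v ∈ A(z)`, an edge between the copy of `u` for `X` and the copy of `v` for `Y`
whenever `v ∈ X` and `u ∈ Y`. -/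
def KnotAdj (G : LoopGraph V) (z : V) (p q : V × Set V) : Prop :=
  G.Adj p.1 q.1 ∧ p.1 ∈ G.Aset z ∧ q.1 ∈ G.Aset z ∧ q.1 ∈ p.2 ∧ p.1 ∈ q.2

/-- The `z`-anchored Δ-knotting graph of `G` is bipartite (it is 2-colourable). -/
def KnotBipartite (G : LoopGraph V) (z : V) : Prop :=
  ∃ c : V × Set V → Bool, ∀ p q, G.KnotVertex z p → G.KnotVertex z q →
    G.KnotAdj z p q → c p ≠ c q

/-! Non-inverting sets. -/

/-- `X` is a non-inverting set of `G`. -/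
def NonInvertingSet (G : LoopGraph V) (X : Set V) : Prop :=
  (∀ u ∈ X, ∀ v ∈ X, ¬ G.TwoOverlapEdge u v) ∧
  ¬ ∃ x ∈ X, ∃ y ∈ X, ∃ k, 0 < k ∧ ∃ P Q : ℕ → V,
      G.IsWalk k P ∧ G.IsWalk k Q ∧ (∀ i ≤ k, P i ∈ X) ∧ (∀ i ≤ k, Q i ∈ X) ∧
      P 0 = x ∧ P k = y ∧ Q 0 = y ∧ Q k = x ∧ G.WalksAvoid k P Q

end LoopGraph

/-!
Edge-labelled graphs: graphs (with loops) in which every edge is labelled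
inclusion or overlap, loops being labelled inclusion.
-/

structure ELGraph (V : Type) where
  Adj : V → V → Prop
  symm : ∀ u v, Adj u v → Adj v u
  refl : ∀ u, Adj u u
  /-- `Ovl u v` means the edge `uv` is labelled as an overlap edge. -/
  Ovl : V → V → Prop
  ovl_symm : ∀ u v, Ovl u v → Ovl v u
  ovl_adj : ∀ u v, Ovl u v → Adj u v
  ovl_irrefl : ∀ u, ¬ Ovl u u

namespace ELGraph

variable {V : Type}

/-- Closed neighbourhood `N[u]`. -/
def nbhd (G : ELGraph V) (u : V) : Set V := {v | G.Adj u v}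

/-- `uv` is (labelled as) an inclusion edge. -/
def InclEdge (G : ELGraph V) (u v : V) : Prop := G.Adj u v ∧ ¬ G.Ovl u v

/-- A walk with `k` edges. -/
def IsWalk (G : ELGraph V) (k : ℕ) (P : ℕ → V) : Prop :=
  ∀ i < k, G.Adj (P i) (P (i + 1))

/-- `z` avoids the edge `ab`: every neighbour of `z` among `a, b` overlaps `z`, and if
`z` overlaps both `a` and `b` then the edge `ab` is an inclusion edge. -/
def AvoidsEdge (G : ELGraph V) (z a b : V) : Prop :=
  (G.Adj z a → G.Ovl z a) ∧ (G.Adj z b → G.Ovl z b) ∧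
  (G.Ovl z a → G.Ovl z b → ¬ G.Ovl a b)

/-- The walks `P` and `Q` (both with `k` edges) avoid each other. -/
def WalksAvoid (G : ELGraph V) (k : ℕ) (P Q : ℕ → V) : Prop :=
  ∀ i < k, G.AvoidsEdge (P i) (Q i) (Q (i + 1)) ∧ G.AvoidsEdge (Q (i + 1)) (P i) (P (i + 1))

/-- The ordered pair `p` is related to the ordered pair `q`: there exist a walk from
`p.1` to `q.1` and a walk from `p.2` to `q.2`, of the same (positive) length, that
avoid each other. -/
def Related (G : ELGraph V) (p q : V × V) : Prop :=
  ∃ k, 0 < k ∧ ∃ P Q : ℕ → V, G.IsWalk k P ∧ G.IsWalk k Q ∧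
    P 0 = p.1 ∧ Q 0 = p.2 ∧ P k = q.1 ∧ Q k = q.2 ∧ G.WalksAvoid k P Q

/-- A Δ-implication class: a maximal set of pairwise related ordered pairs. -/
def IsDeltaClass (G : ELGraph V) (A : Set (V × V)) : Prop :=
  A.Nonempty ∧ (∀ p ∈ A, ∀ q ∈ A, G.Related p q) ∧
  ∀ B : Set (V × V), A ⊆ B → (∀ p ∈ B, ∀ q ∈ B, G.Related p q) → B = A

/-- `A⁻¹ = {(u,v) : (v,u) ∈ A}`. -/
def inv (A : Set (V × V)) : Set (V × V) := {p | p.swap ∈ A}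

/-- `span A`: the set of vertices incident to pairs of `A`. -/
def span (A : Set (V × V)) : Set V := {v | ∃ p ∈ A, v = p.1 ∨ v = p.2}

/-- `S` induces a clique. -/
def IsClique (G : ELGraph V) (S : Set V) : Prop := ∀ a ∈ S, ∀ b ∈ S, G.Adj a b

/-- A Δ-module. -/
def IsDeltaModule (G : ELGraph V) (S : Set V) : Prop :=
  S.Nonempty ∧
  (∀ x, x ∉ S →
    ((∀ s ∈ S, ¬ G.Adj x s) ∨ (∀ s ∈ S, G.InclEdge x s) ∨ (∀ s ∈ S, G.Ovl x s))) ∧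
  (¬ G.IsClique S → ∀ x, x ∉ S → ∀ s ∈ S, ¬ G.Ovl x s)

/-- A trivial Δ-module: the whole vertex set or a single vertex. -/
def TrivialModule (S : Set V) : Prop := S = Set.univ ∨ ∃ a : V, S = {a}

/-- `{a,b}` is a Δ-invertible pair: `(a,b)` is related to `(b,a)`. -/
def DeltaInvertiblePair (G : ELGraph V) (a b : V) : Prop := G.Related (a, b) (b, a)

/-- An interval ordering of an edge-labelled graph. -/
def IsIntervalOrdering (G : ELGraph V) (lt : V → V → Prop) : Prop :=
  IsStrictTotalOrder V lt ∧
  ¬ ∃ a b c, lt a b ∧ lt b c ∧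
    ((¬ G.Adj a b ∧ G.Adj a c) ∨
     (G.InclEdge a b ∧ ¬ G.Adj a c ∧ G.Adj b c) ∨
     (G.Ovl a b ∧ G.Adj a c ∧ ¬ G.Adj b c) ∨
     (G.Ovl a b ∧ G.Ovl b c ∧ G.InclEdge a c) ∨
     (G.InclEdge a b ∧ G.InclEdge b c ∧ G.Ovl a c))

/-- An interval representation of `G` consistent with its labelling. -/
def IsConsistentIntervalRep (G : ELGraph V) (l r : V → ℝ) : Prop :=
  (∀ v, l v ≤ r v) ∧
  (∀ u v, (G.Adj u v ↔ (Set.Icc (l u) (r u) ∩ Set.Icc (l v) (r v)).Nonempty)) ∧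
  (∀ u v, (G.Ovl u v ↔
    ((Set.Icc (l u) (r u) ∩ Set.Icc (l v) (r v)).Nonempty ∧
     ¬ Set.Icc (l u) (r u) ⊆ Set.Icc (l v) (r v) ∧
     ¬ Set.Icc (l v) (r v) ⊆ Set.Icc (l u) (r u))))

/-- A consistently edge-labelled graph: there is a transitive orientation `D` of its
inclusion edges (between distinct vertices) such that `D u v → N[v] ⊆ N[u]`. -/
def ConsistentlyLabelled (G : ELGraph V) : Prop :=
  ∃ D : V → V → Prop,
    (∀ u v, D u v → u ≠ v ∧ G.InclEdge u v) ∧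
    (∀ u v, u ≠ v → G.InclEdge u v → (D u v ↔ ¬ D v u)) ∧
    (∀ u v w, D u v → D v w → D u w) ∧
    (∀ u v, D u v → G.nbhd v ⊆ G.nbhd u)

end ELGraph

noncomputable def caipPos (L t : ℝ) : ℝ := if t < L then t - L + 1 else t - L

noncomputable def caipE (L s e : ℝ) : ℝ :=
  if caipPos L s < caipPos L e then caipPos L e else caipPos L e + 1

def caipMem (L s e p : ℝ) : Prop :=
  (caipPos L s ≤ p ∧ p ≤ caipE L s e) ∨
  (caipPos L s ≤ p + 1 ∧ p + 1 ≤ caipE L s e)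

lemma caipPos_mem {L t : ℝ} (hL0 : 0 ≤ L) (hL1 : L < 1) (h0 : 0 ≤ t) (h1 : t < 1) :
    0 ≤ caipPos L t ∧ caipPos L t < 1 := by
  unfold caipPos; split_ifs <;> constructor <;> linarith

lemma caipPos_inj {L t u : ℝ} (h0 : 0 ≤ t) (h1 : t < 1) (h2 : 0 ≤ u) (h3 : u < 1)
    (h : caipPos L t = caipPos L u) : t = u := by
  unfold caipPos at h; split_ifs at h <;> linarith

lemma caipPos_self {L : ℝ} : caipPos L L = 0 := by
  unfold caipPos; split_ifs with h
  · exact absurd h (lt_irrefl L)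
  · ring

lemma caipPos_surj {L p : ℝ} (hL0 : 0 ≤ L) (hL1 : L < 1) (h0 : 0 ≤ p) (h1 : p < 1) :
    ∃ t, 0 ≤ t ∧ t < 1 ∧ caipPos L t = p := by
  refine ⟨if p + L < 1 then p + L else p + L - 1, ?_⟩
  unfold caipPos; split_ifs <;> refine ⟨by linarith, by linarith, by linarith⟩

lemma caipE_eq {L s e : ℝ} :
    (caipPos L s < caipPos L e ∧ caipE L s e = caipPos L e) ∨
    (caipPos L e ≤ caipPos L s ∧ caipE L s e = caipPos L e + 1) := by
  unfold caipE; split_ifs with h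
  exacts [Or.inl ⟨h, rfl⟩, Or.inr ⟨not_lt.mp h, rfl⟩]

lemma caipSE {L s e : ℝ} (hL0 : 0 ≤ L) (hL1 : L < 1) (h1 : 0 ≤ s) (h2 : s < 1)
    (h3 : 0 ≤ e) (h4 : e < 1) (hne : s ≠ e) :
    caipPos L s < caipE L s e ∧ caipE L s e < caipPos L s + 1 := by
  have hps := caipPos_mem hL0 hL1 h1 h2
  have hpe := caipPos_mem hL0 hL1 h3 h4
  have hpne : caipPos L s ≠ caipPos L e := fun h => hne (caipPos_inj h1 h2 h3 h4 h)
  unfold caipE; split_ifs with h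
  · exact ⟨h, by linarith⟩
  · have h' : caipPos L e < caipPos L s := lt_of_le_of_ne (not_lt.mp h) (Ne.symm hpne)
    exact ⟨by linarith, by linarith⟩

lemma caipMem_bridge {L lw rw t : ℝ} (hL0 : 0 ≤ L) (hL1 : L < 1)
    (h1 : 0 ≤ lw) (h2 : lw < 1) (h3 : 0 ≤ rw) (h4 : rw < 1)
    (h5 : 0 ≤ t) (h6 : t < 1) (hne : lw ≠ rw) :
    arcMem lw rw t ↔ caipMem L lw rw (caipPos L t) := by
  unfold caipMem caipE caipPos arcMem
  rcases lt_or_gt_of_ne hne with hne' | hne' <;> split_ifs <;>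
    (constructor
     · rintro (⟨g1, g2, g3⟩ | ⟨g1, (g2 | g2)⟩) <;>
         first
           | exact Or.inl ⟨by linarith, by linarith⟩
           | exact Or.inr ⟨by linarith, by linarith⟩
     · rintro (⟨g1, g2⟩ | ⟨g1, g2⟩) <;>
         first
           | exact Or.inl ⟨by linarith, by linarith, by linarith⟩
           | exact Or.inr ⟨by linarith, Or.inl (by linarith)⟩
           | exact Or.inr ⟨by linarith, Or.inr (by linarith)⟩)

lemma caipEinj {V : Type} (l r : V → ℝ)
    (hl : ∀ v, l v ∈ Set.Ico (0:ℝ) 1) (hr : ∀ v, r v ∈ Set.Ico (0:ℝ) 1)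
    (rinj : ∀ a b : V, r a = r b → a = b) (z a b : V)
    (h : caipE (l z) (l a) (r a) = caipE (l z) (l b) (r b)) : a = b := by
  have hLz := Set.mem_Ico.mp (hl z)
  have hpa := caipPos_mem (L := l z) hLz.1 hLz.2 (Set.mem_Ico.mp (hr a)).1 (Set.mem_Ico.mp (hr a)).2
  have hpb := caipPos_mem (L := l z) hLz.1 hLz.2 (Set.mem_Ico.mp (hr b)).1 (Set.mem_Ico.mp (hr b)).2
  rcases caipE_eq (L := l z) (s := l a) (e := r a) with ⟨_, h1⟩ | ⟨_, h1⟩ <;>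
    rcases caipE_eq (L := l z) (s := l b) (e := r b) with ⟨_, h2⟩ | ⟨_, h2⟩ <;>
    rw [h1, h2] at h <;>
    first
      | exact rinj a b (caipPos_inj (Set.mem_Ico.mp (hr a)).1 (Set.mem_Ico.mp (hr a)).2
          (Set.mem_Ico.mp (hr b)).1 (Set.mem_Ico.mp (hr b)).2 (by linarith))
      | (exfalso; linarith)

lemma caipHalf {V : Type} (G : LoopGraph V) (l r : V → ℝ)
    (hl : ∀ v, l v ∈ Set.Ico (0:ℝ) 1) (hr : ∀ v, r v ∈ Set.Ico (0:ℝ) 1)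
    (linj : ∀ a b : V, l a = l b → a = b)
    (lrne : ∀ a b : V, l a ≠ r b)
    (hadj : ∀ u v, (G.Adj u v ↔ ∃ t ∈ Set.Ico (0:ℝ) 1,
      arcMem (l u) (r u) t ∧ arcMem (l v) (r v) t))
    (z u v w : V)
    (hgv : G.Adj z v → G.Overlaps z v)
    (hgw : G.Adj z w → G.Overlaps z w)
    (hvw : G.Adj v w)
    (h2 : G.Adj u v → G.Overlaps u v)
    (h3 : G.Adj u w → G.Overlaps u w)
    (h4 : G.Overlaps u v → G.Overlaps u w → ¬ G.Overlaps v w)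
    (h5 : G.Overlaps z v → G.Overlaps z w → ¬ G.Overlaps v w)
    (hvu : caipE (l z) (l v) (r v) < caipE (l z) (l u) (r u))
    (huw : caipE (l z) (l u) (r u) < caipE (l z) (l w) (r w)) : False := by
  have hLz := Set.mem_Ico.mp (hl z)
  have hL0 : (0:ℝ) ≤ l z := hLz.1
  have hL1 : l z < 1 := hLz.2
  have hlb : ∀ a : V, 0 ≤ l a ∧ l a < 1 := fun a => Set.mem_Ico.mp (hl a)
  have hrb : ∀ a : V, 0 ≤ r a ∧ r a < 1 := fun a => Set.mem_Ico.mp (hr a)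
  have hlrne : ∀ a : V, l a ≠ r a := fun a => lrne a a
  -- bounds for S
  have hS : ∀ a : V, 0 ≤ caipPos (l z) (l a) ∧ caipPos (l z) (l a) < 1 :=
    fun a => caipPos_mem hL0 hL1 (hlb a).1 (hlb a).2
  have hSE : ∀ a : V, caipPos (l z) (l a) < caipE (l z) (l a) (r a) ∧
      caipE (l z) (l a) (r a) < caipPos (l z) (l a) + 1 :=
    fun a => caipSE hL0 hL1 (hlb a).1 (hlb a).2 (hrb a).1 (hrb a).2 (hlrne a)
  -- adjacency interface
  have adj_iff : ∀ a b : V, G.Adj a b ↔ ∃ p, 0 ≤ p ∧ p < 1 ∧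
      caipMem (l z) (l a) (r a) p ∧ caipMem (l z) (l b) (r b) p := by
    intro a b
    rw [hadj a b]
    constructor
    · rintro ⟨t, ht, ha, hb⟩
      have htb := Set.mem_Ico.mp ht
      have hp := caipPos_mem (L := l z) hL0 hL1 htb.1 htb.2
      exact ⟨caipPos (l z) t, hp.1, hp.2,
        (caipMem_bridge hL0 hL1 (hlb a).1 (hlb a).2 (hrb a).1 (hrb a).2 htb.1 htb.2
          (hlrne a)).mp ha,
        (caipMem_bridge hL0 hL1 (hlb b).1 (hlb b).2 (hrb b).1 (hrb b).2 htb.1 htb.2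
          (hlrne b)).mp hb⟩
    · rintro ⟨p, hp0, hp1, ha, hb⟩
      obtain ⟨t, ht0, ht1, htp⟩ := caipPos_surj (L := l z) hL0 hL1 hp0 hp1
      refine ⟨t, Set.mem_Ico.mpr ⟨ht0, ht1⟩, ?_, ?_⟩
      · rw [caipMem_bridge hL0 hL1 (hlb a).1 (hlb a).2 (hrb a).1 (hrb a).2 ht0 ht1 (hlrne a),
          htp]
        exact ha
      · rw [caipMem_bridge hL0 hL1 (hlb b).1 (hlb b).2 (hrb b).1 (hrb b).2 ht0 ht1 (hlrne b),
          htp]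
        exact hb
  have adj_of_pt : ∀ a b : V, ∀ p : ℝ, 0 ≤ p → p < 1 → caipMem (l z) (l a) (r a) p →
      caipMem (l z) (l b) (r b) p → G.Adj a b :=
    fun a b p h0 h1 ha hb => (adj_iff a b).mpr ⟨p, h0, h1, ha, hb⟩
  have nbhd_sub : ∀ a b : V,
      (∀ p : ℝ, 0 ≤ p → p < 1 → caipMem (l z) (l a) (r a) p → caipMem (l z) (l b) (r b) p) →
      G.nbhd a ⊆ G.nbhd b := by
    intro a b hab t ht
    have ht' : G.Adj a t := ht
    obtain ⟨p, h0, h1, hpa, hpt⟩ := (adj_iff a t).mp ht'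
    exact (adj_iff b t).mpr ⟨p, h0, h1, hab p h0 h1 hpa, hpt⟩
  have memS : ∀ a : V, caipMem (l z) (l a) (r a) (caipPos (l z) (l a)) :=
    fun a => Or.inl ⟨le_rfl, (hSE a).1.le⟩
  have oirr : ∀ a : V, ¬ G.Overlaps a a := fun a h => h.2.1 subset_rfl
  -- ζ facts
  have hζmem := caipPos_mem (L := l z) hL0 hL1 (hrb z).1 (hrb z).2
  have hζne : caipPos (l z) (r z) ≠ 0 := fun h =>
    lrne z z (caipPos_inj (hlb z).1 (hlb z).2 (hrb z).1 (hrb z).2 (caipPos_self.trans h.symm))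
  have hζ0 : 0 < caipPos (l z) (r z) := lt_of_le_of_ne hζmem.1 (Ne.symm hζne)
  have hEz : caipE (l z) (l z) (r z) = caipPos (l z) (r z) := by
    rcases caipE_eq (L := l z) (s := l z) (e := r z) with ⟨_, h⟩ | ⟨hle, _⟩
    · exact h
    · rw [caipPos_self] at hle; linarith
  have hmemzf : ∀ p : ℝ, 0 ≤ p → caipMem (l z) (l z) (r z) p → p ≤ caipPos (l z) (r z) := by
    rintro p h0 (⟨g1, g2⟩ | ⟨g1, g2⟩)
    · rwa [hEz] at g2
    · rw [hEz] at g2; linarith [hζmem.2]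
  have hmemzb : ∀ p : ℝ, 0 ≤ p → p ≤ caipPos (l z) (r z) → caipMem (l z) (l z) (r z) p := by
    intro p h0 hp
    exact Or.inl ⟨by rw [caipPos_self]; exact h0, by rw [hEz]; exact hp⟩
  -- the cover lemma
  have cover : ∀ c : V, G.Overlaps c v → G.Overlaps c w → ¬ G.Overlaps v w →
      (∀ p : ℝ, 0 ≤ p → p < 1 → caipMem (l z) (l c) (r c) p →
        caipMem (l z) (l v) (r v) p ∨ caipMem (l z) (l w) (r w) p) → False := by
    intro c hov how hno hcov
    have hcomp : G.nbhd v ⊆ G.nbhd w ∨ G.nbhd w ⊆ G.nbhd v := by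
      by_contra hc
      push_neg at hc
      exact hno ⟨hvw, hc.1, hc.2⟩
    rcases hcomp with hc | hc
    · obtain ⟨t, htc, htw⟩ := Set.not_subset.mp how.2.1
      have htv : t ∉ G.nbhd v := fun h => htw (hc h)
      obtain ⟨p, h0, h1, hpc, hpt⟩ := (adj_iff c t).mp htc
      rcases hcov p h0 h1 hpc with h | h
      · exact htv ((adj_iff v t).mpr ⟨p, h0, h1, h, hpt⟩)
      · exact htw ((adj_iff w t).mpr ⟨p, h0, h1, h, hpt⟩)
    · obtain ⟨t, htc, htv⟩ := Set.not_subset.mp hov.2.1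
      have htw : t ∉ G.nbhd w := fun h => htv (hc h)
      obtain ⟨p, h0, h1, hpc, hpt⟩ := (adj_iff c t).mp htc
      rcases hcov p h0 h1 hpc with h | h
      · exact htv ((adj_iff v t).mpr ⟨p, h0, h1, h, hpt⟩)
      · exact htw ((adj_iff w t).mpr ⟨p, h0, h1, h, hpt⟩)
  -- step 1 : S v < S u
  have hneuv : u ≠ v := fun h => absurd hvu (by rw [h]; exact lt_irrefl _)
  have hneuw : u ≠ w := fun h => absurd huw (by rw [h]; exact lt_irrefl _)
  have hSneuv : caipPos (l z) (l u) ≠ caipPos (l z) (l v) := fun h =>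
    hneuv (linj u v (caipPos_inj (hlb u).1 (hlb u).2 (hlb v).1 (hlb v).2 h))
  have hSneuw : caipPos (l z) (l u) ≠ caipPos (l z) (l w) := fun h =>
    hneuw (linj u w (caipPos_inj (hlb u).1 (hlb u).2 (hlb w).1 (hlb w).2 h))
  have hSvu : caipPos (l z) (l v) < caipPos (l z) (l u) := by
    rcases lt_or_gt_of_ne hSneuv with h | h
    · exfalso
      have hsub : ∀ p : ℝ, 0 ≤ p → p < 1 → caipMem (l z) (l v) (r v) p →
          caipMem (l z) (l u) (r u) p := by
        rintro p _ _ (⟨g1, g2⟩ | ⟨g1, g2⟩)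
        · exact Or.inl ⟨by linarith, by linarith⟩
        · exact Or.inr ⟨by linarith, by linarith⟩
      have hadjuv : G.Adj u v := adj_of_pt u v (caipPos (l z) (l v)) (hS v).1 (hS v).2
        (Or.inl ⟨h.le, by linarith [(hSE v).1]⟩) (memS v)
      exact (h2 hadjuv).2.2 (nbhd_sub v u hsub)
    · exact h
  -- step 2 : S u < S w
  have hSuw : caipPos (l z) (l u) < caipPos (l z) (l w) := by
    rcases lt_or_gt_of_ne hSneuw with h | h
    · exact h
    · exfalso
      have hsub : ∀ p : ℝ, 0 ≤ p → p < 1 → caipMem (l z) (l u) (r u) p →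
          caipMem (l z) (l w) (r w) p := by
        rintro p _ _ (⟨g1, g2⟩ | ⟨g1, g2⟩)
        · exact Or.inl ⟨by linarith, by linarith⟩
        · exact Or.inr ⟨by linarith, by linarith⟩
      have hadjuw : G.Adj u w := adj_of_pt u w (caipPos (l z) (l u)) (hS u).1 (hS u).2
        (memS u) (Or.inl ⟨h.le, by linarith [(hSE u).1]⟩)
      exact (h3 hadjuw).2.1 (nbhd_sub u w hsub)
  -- step 3 : the two ways v and w can meet
  have hcase : caipPos (l z) (l w) ≤ caipE (l z) (l v) (r v) ∨
      caipPos (l z) (l v) + 1 ≤ caipE (l z) (l w) (r w) := by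
    obtain ⟨p, hp0, hp1, hmv, hmw⟩ := (adj_iff v w).mp hvw
    rcases hmv with ⟨g1, g2⟩ | ⟨g1, g2⟩ <;> rcases hmw with ⟨f1, f2⟩ | ⟨f1, f2⟩
    · exact Or.inl (by linarith)
    · exact Or.inr (by linarith)
    · exact Or.inl (by linarith)
    · exact Or.inl (by linarith)
  rcases hcase with hc0 | hc1
  · -- case I : covering with the arc of u
    have hOuv : G.Overlaps u v := h2 (adj_of_pt u v (caipPos (l z) (l u)) (hS u).1 (hS u).2
      (memS u) (Or.inl ⟨hSvu.le, by linarith⟩))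
    have hOuw : G.Overlaps u w := h3 (adj_of_pt u w (caipPos (l z) (l w)) (hS w).1 (hS w).2
      (Or.inl ⟨hSuw.le, by linarith⟩) (memS w))
    refine cover u hOuv hOuw (h4 hOuv hOuw) ?_
    rintro p h0 h1 (⟨g1, g2⟩ | ⟨g1, g2⟩)
    · by_cases hd : p ≤ caipE (l z) (l v) (r v)
      · exact Or.inl (Or.inl ⟨by linarith, hd⟩)
      · exact Or.inr (Or.inl ⟨by linarith, by linarith⟩)
    · by_cases hd : p + 1 ≤ caipE (l z) (l v) (r v)
      · exact Or.inl (Or.inr ⟨by linarith, hd⟩)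
      · exact Or.inr (Or.inr ⟨by linarith, by linarith⟩)
  · -- case II : covering with the arc of z
    have hG2w : caipE (l z) (l w) (r w) ≤ 1 + caipPos (l z) (r z) := by
      by_contra hcon
      push_neg at hcon
      have hsubz : ∀ p : ℝ, 0 ≤ p → p < 1 → caipMem (l z) (l z) (r z) p →
          caipMem (l z) (l w) (r w) p := by
        intro p h0 h1 hm
        have hpζ := hmemzf p h0 hm
        exact Or.inr ⟨by linarith [(hS w).2], by linarith⟩
      have hadjzw : G.Adj z w := adj_of_pt z w (caipPos (l z) (r z)) hζmem.1 hζmem.2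
        (hmemzb _ hζmem.1 le_rfl) (Or.inr ⟨by linarith [(hS w).2], by linarith⟩)
      exact (hgw hadjzw).2.1 (nbhd_sub z w hsubz)
    have hSvζ : caipPos (l z) (l v) ≠ caipPos (l z) (r z) := fun h =>
      lrne v z (caipPos_inj (hlb v).1 (hlb v).2 (hrb z).1 (hrb z).2 h)
    have hSvζ' : caipPos (l z) (l v) < caipPos (l z) (r z) :=
      lt_of_le_of_ne (by linarith) hSvζ
    have hG1v : caipPos (l z) (r z) ≤ caipE (l z) (l v) (r v) := by
      by_contra hcon
      push_neg at hcon
      have hsub : ∀ p : ℝ, 0 ≤ p → p < 1 → caipMem (l z) (l v) (r v) p →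
          caipMem (l z) (l z) (r z) p := by
        rintro p h0 h1 (⟨g1, g2⟩ | ⟨g1, g2⟩)
        · exact hmemzb p h0 (by linarith)
        · exfalso; linarith [hζmem.2]
      have hadjzv : G.Adj z v := adj_of_pt z v (caipPos (l z) (l v)) (hS v).1 (hS v).2
        (hmemzb _ (hS v).1 hSvζ'.le) (memS v)
      exact (hgv hadjzv).2.2 (nbhd_sub v z hsub)
    have hOzv : G.Overlaps z v := hgv (adj_of_pt z v (caipPos (l z) (l v)) (hS v).1 (hS v).2
      (hmemzb _ (hS v).1 hSvζ'.le) (memS v))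
    have hOzw : G.Overlaps z w := by
      refine hgw (adj_of_pt z w (caipE (l z) (l w) (r w) - 1) ?_ ?_ ?_ ?_)
      · linarith [(hS v).1]
      · linarith [(hSE w).2, (hS w).2]
      · exact hmemzb _ (by linarith [(hS v).1]) (by linarith)
      · exact Or.inr ⟨by linarith [(hSE w).1], by linarith⟩
    refine cover z hOzv hOzw (h5 hOzv hOzw) ?_
    intro p h0 h1 hm
    have hpζ := hmemzf p h0 hm
    by_cases hcp : caipPos (l z) (l v) ≤ p
    · exact Or.inl (Or.inl ⟨hcp, by linarith⟩)
    · exact Or.inr (Or.inr ⟨by linarith [(hS w).2], by linarith⟩)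

/-- If `G` is a circular-arc graph with no universal vertices and no
true twins, then `G` contains no anchored invertible pair. -/
theorem circularArc_no_anchored_invertible_pair
    {V : Type} [Fintype V] (G : LoopGraph V)
    (hu : ∀ u, ¬ G.Universal u) (ht : ∀ u v, ¬ G.TrueTwins u v)
    (hca : G.IsCircularArc) :
    ¬ G.HasAnchoredInvertiblePair := by
  rintro ⟨z, x, y, hxy, hxz, hyz, k, P, Q, hPw, hQw, hP0, hPk, hQ0, hQk, hW, hAP, hAQ⟩
  obtain ⟨l, r, hl, hr, hinj, hadj⟩ := hca
  have linj : ∀ a b : V, l a = l b → a = b := by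
    intro a b h
    have := hinj (a₁ := Sum.inl a) (a₂ := Sum.inl b) (by simpa using h)
    simpa using this
  have rinj : ∀ a b : V, r a = r b → a = b := by
    intro a b h
    have := hinj (a₁ := Sum.inr a) (a₂ := Sum.inr b) (by simpa using h)
    simpa using this
  have lrne : ∀ a b : V, l a ≠ r b := by
    intro a b h
    have := hinj (a₁ := Sum.inl a) (a₂ := Sum.inr b) (by simpa using h)
    simp at this
  have osymm : ∀ a b : V, G.Overlaps a b → G.Overlaps b a :=
    fun a b h => ⟨G.symm a b h.1, h.2.2, h.2.1⟩
  have oirr : ∀ a : V, ¬ G.Overlaps a a := fun a h => h.2.1 subset_rfl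
  have neqo : ∀ a b : V, (G.Adj a b → G.Overlaps a b) → a ≠ b := by
    intro a b h heq
    rw [heq] at h
    exact oirr b (h (G.refl b))
  have Einj : ∀ a b : V, caipE (l z) (l a) (r a) = caipE (l z) (l b) (r b) → a = b :=
    fun a b h => caipEinj l r hl hr rinj z a b h
  have step : ∀ i, i < k →
      ((caipE (l z) (l (P i)) (r (P i)) < caipE (l z) (l (Q i)) (r (Q i))) ↔
        (caipE (l z) (l (P (i+1))) (r (P (i+1))) <
          caipE (l z) (l (Q (i+1))) (r (Q (i+1))))) := by
    intro i hi
    obtain ⟨e1, e2, e3⟩ := (hW i hi).1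
    obtain ⟨f1, f2, f3⟩ := (hW i hi).2
    have hgPi : G.Adj z (P i) → G.Overlaps z (P i) := hAP.1 i (Nat.le_of_lt hi)
    have hgPi1 : G.Adj z (P (i+1)) → G.Overlaps z (P (i+1)) :=
      hAP.1 (i+1) (Nat.succ_le_of_lt hi)
    have hgQi : G.Adj z (Q i) → G.Overlaps z (Q i) := hAQ.1 i (Nat.le_of_lt hi)
    have hgQi1 : G.Adj z (Q (i+1)) → G.Overlaps z (Q (i+1)) :=
      hAQ.1 (i+1) (Nat.succ_le_of_lt hi)
    have ztP := hAP.2 i hi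
    have ztQ := hAQ.2 i hi
    have hAdjP := hPw i hi
    have hAdjQ := hQw i hi
    have I1 : ¬ (caipE (l z) (l (Q i)) (r (Q i)) < caipE (l z) (l (P i)) (r (P i)) ∧
        caipE (l z) (l (P i)) (r (P i)) < caipE (l z) (l (Q (i+1))) (r (Q (i+1)))) :=
      fun ⟨ha, hb⟩ => caipHalf G l r hl hr linj lrne hadj z (P i) (Q i) (Q (i+1))
        hgQi hgQi1 hAdjQ e1 e2 e3 ztQ ha hb
    have I2 : ¬ (caipE (l z) (l (Q (i+1))) (r (Q (i+1))) < caipE (l z) (l (P i)) (r (P i)) ∧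
        caipE (l z) (l (P i)) (r (P i)) < caipE (l z) (l (Q i)) (r (Q i))) :=
      fun ⟨ha, hb⟩ => caipHalf G l r hl hr linj lrne hadj z (P i) (Q (i+1)) (Q i)
        hgQi1 hgQi (G.symm _ _ hAdjQ) e2 e1
        (fun o1 o2 o => e3 o2 o1 (osymm _ _ o)) (fun o1 o2 o => ztQ o2 o1 (osymm _ _ o)) ha hb
    have I3 : ¬ (caipE (l z) (l (P i)) (r (P i)) < caipE (l z) (l (Q (i+1))) (r (Q (i+1))) ∧
        caipE (l z) (l (Q (i+1))) (r (Q (i+1))) <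
          caipE (l z) (l (P (i+1))) (r (P (i+1)))) :=
      fun ⟨ha, hb⟩ => caipHalf G l r hl hr linj lrne hadj z (Q (i+1)) (P i) (P (i+1))
        hgPi hgPi1 hAdjP f1 f2 f3 ztP ha hb
    have I4 : ¬ (caipE (l z) (l (P (i+1))) (r (P (i+1))) <
        caipE (l z) (l (Q (i+1))) (r (Q (i+1))) ∧
        caipE (l z) (l (Q (i+1))) (r (Q (i+1))) < caipE (l z) (l (P i)) (r (P i))) :=
      fun ⟨ha, hb⟩ => caipHalf G l r hl hr linj lrne hadj z (Q (i+1)) (P (i+1)) (P i)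
        hgPi1 hgPi (G.symm _ _ hAdjP) f2 f1
        (fun o1 o2 o => f3 o2 o1 (osymm _ _ o)) (fun o1 o2 o => ztP o2 o1 (osymm _ _ o)) ha hb
    have dPQ : P i ≠ Q i := neqo _ _ e1
    have dPQ1 : Q (i+1) ≠ P i := neqo _ _ f1
    have dQ1P1 : Q (i+1) ≠ P (i+1) := neqo _ _ f2
    constructor
    · intro h
      have hmid : caipE (l z) (l (P i)) (r (P i)) <
          caipE (l z) (l (Q (i+1))) (r (Q (i+1))) := by
        rcases lt_trichotomy (caipE (l z) (l (P i)) (r (P i)))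
          (caipE (l z) (l (Q (i+1))) (r (Q (i+1)))) with hlt | heq | hgt
        · exact hlt
        · exact absurd (Einj _ _ heq) (fun hh => dPQ1 hh.symm)
        · exact absurd ⟨hgt, h⟩ I2
      rcases lt_trichotomy (caipE (l z) (l (P (i+1))) (r (P (i+1))))
        (caipE (l z) (l (Q (i+1))) (r (Q (i+1)))) with hlt | heq | hgt
      · exact hlt
      · exact absurd (Einj _ _ heq) (fun hh => dQ1P1 hh.symm)
      · exact absurd ⟨hmid, hgt⟩ I3
    · intro h
      have hmid : caipE (l z) (l (P i)) (r (P i)) <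
          caipE (l z) (l (Q (i+1))) (r (Q (i+1))) := by
        rcases lt_trichotomy (caipE (l z) (l (P i)) (r (P i)))
          (caipE (l z) (l (Q (i+1))) (r (Q (i+1)))) with hlt | heq | hgt
        · exact hlt
        · exact absurd (Einj _ _ heq) (fun hh => dPQ1 hh.symm)
        · exact absurd ⟨h, hgt⟩ I4
      rcases lt_trichotomy (caipE (l z) (l (P i)) (r (P i)))
        (caipE (l z) (l (Q i)) (r (Q i))) with hlt | heq | hgt
      · exact hlt
      · exact absurd (Einj _ _ heq) dPQ
      · exact absurd ⟨hgt, hmid⟩ I1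
  have main : ∀ i, i ≤ k →
      ((caipE (l z) (l (P 0)) (r (P 0)) < caipE (l z) (l (Q 0)) (r (Q 0))) ↔
        (caipE (l z) (l (P i)) (r (P i)) < caipE (l z) (l (Q i)) (r (Q i)))) := by
    intro i
    induction i with
    | zero => intro _; exact Iff.rfl
    | succ n ih =>
        intro hn
        exact (ih (Nat.le_of_succ_le hn)).trans (step n (Nat.lt_of_succ_le hn))
  have hk := main k le_rfl
  rw [hP0, hQ0, hPk, hQk] at hk
  have hExy : caipE (l z) (l x) (r x) ≠ caipE (l z) (l y) (r y) :=
    fun h => hxy (Einj _ _ h)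
  rcases lt_trichotomy (caipE (l z) (l x) (r x)) (caipE (l z) (l y) (r y)) with h | h | h
  · exact lt_asymm h (hk.mp h)
  · exact hExy h
  · exact lt_asymm h (hk.mpr h)
end

section
/- Let {[l_u, r_u]}_{u ∈ V} be a normalized circular-arc representation of a graph G = (V, E). Let xy ∈ E and let z, w ∈ V be vertices such that the left endpoints occur in the clockwise circular order l_x < l_z < l_y < l_w. Then at least one of z, w does not avoid the edge xy. -/
/-!
Since the arcs of `x` and `y` meet, one of them contains the left endpoint of the other;
by the cyclic symmetry of `l x < l z < l y < l w` we may assume `l y` lies on the arc of `x`,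
and show that `z` does not avoid `xy`. Then `l z` lies on the arc of `x`, so `z` must overlap
`x`; in a normalized representation this forces the arc of `z` to run past `r x`, hence over
`l y`, so `z` overlaps `y` as well, and `xy` must be an inclusion edge. `N[x] ⊆ N[y]` would
make the arc of `y` cover the circle, while `N[y] ⊆ N[x]` puts the arc of `y` inside
`[l y, r x]`, which lies inside the arc of `z`, contradicting that `z` overlaps `y`.
-/

section Arc

lemma arcMem_left (l r : ℝ) : arcMem l r l := by
  unfold arcMem; grind

lemma arcMem_right (l r : ℝ) : arcMem l r r := by
  unfold arcMem; grind

lemma arcMem_or_arcMem_swap {a b : ℝ} (h : a ≠ b) (t : ℝ) : arcMem a b t ∨ arcMem b a t := by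
  unfold arcMem; grind

lemma exists_not_arcMem {l r : ℝ} (hl : l ∈ Set.Ico (0 : ℝ) 1) (hr : r ∈ Set.Ico (0 : ℝ) 1)
    (h : l ≠ r) : ∃ p ∈ Set.Ico (0 : ℝ) 1, ¬ arcMem l r p := by
  obtain ⟨hl0, hl1⟩ := hl
  obtain ⟨hr0, hr1⟩ := hr
  rcases h.lt_or_gt with h | h
  · exact ⟨(r + 1) / 2, ⟨by linarith, by linarith⟩, by unfold arcMem; grind⟩
  · exact ⟨(r + l) / 2, ⟨by linarith, by linarith⟩, by unfold arcMem; grind⟩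

lemma arcMem_left_or_arcMem_left_of_arcMem {l₁ r₁ l₂ r₂ t : ℝ} (h₁ : arcMem l₁ r₁ t)
    (h₂ : arcMem l₂ r₂ t) : arcMem l₁ r₁ l₂ ∨ arcMem l₂ r₂ l₁ := by
  unfold arcMem at *; grind

lemma arcMem.left_subarc {l r t s : ℝ} (h : arcMem l r t) (hs : arcMem l t s) :
    arcMem l r s := by
  unfold arcMem at *; grind

lemma arcMem.right_subarc {l r t s : ℝ} (h : arcMem l r t) (hs : arcMem t r s) :
    arcMem l r s := by
  unfold arcMem at *; grind

lemma arcMem.shift_left {l r s t : ℝ} (ht : arcMem l r t) (hs : arcMem l t s) :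
    arcMem s r t := by
  unfold arcMem at *; grind

lemma arcMem.right_mem_of_not_arcMem {l r s t : ℝ} (hs : arcMem l r s) (ht : ¬ arcMem l r t) :
    arcMem s t r := by
  unfold arcMem at *; grind

/-- An arc that starts and ends on `[l₁, r₁]` but runs past `r₁` covers the complement
of `[l₁, r₁]`. -/
lemma arcMem_of_not_arcMem_of_not_arcMem {l₁ r₁ l₂ r₂ p : ℝ} (hl : arcMem l₁ r₁ l₂)
    (hr : arcMem l₁ r₁ r₂) (h : ¬ arcMem l₂ r₁ r₂) (hp : ¬ arcMem l₁ r₁ p) :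
    arcMem l₂ r₂ p := by
  unfold arcMem at *; grind

lemma left_eq_of_arcSubset_of_arcSubset {l₁ r₁ l₂ r₂ : ℝ} (hl₁ : l₁ ∈ Set.Ico (0 : ℝ) 1)
    (hr₁ : r₁ ∈ Set.Ico (0 : ℝ) 1) (hl₂ : l₂ ∈ Set.Ico (0 : ℝ) 1) (h₁ : l₁ ≠ r₁)
    (h₁₂ : arcSubset l₁ r₁ l₂ r₂) (h₂₁ : arcSubset l₂ r₂ l₁ r₁) : l₁ = l₂ := by
  by_contra hne
  obtain ⟨p, hp, hp₁⟩ := exists_not_arcMem hl₁ hr₁ h₁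
  have hl₂₁ : arcMem l₁ r₁ l₂ := h₂₁ l₂ hl₂ (arcMem_left _ _)
  have hl₁₂ : arcMem l₂ r₂ l₁ := h₁₂ l₁ hl₁ (arcMem_left _ _)
  rcases arcMem_or_arcMem_swap hne p with h | h
  · exact hp₁ (hl₂₁.left_subarc h)
  · exact hp₁ (h₂₁ p hp (hl₁₂.left_subarc h))

lemma arcMem_of_arcSubset_of_arcMem_left {l₁ r₁ l₂ r₂ : ℝ} (hr₂ : r₂ ∈ Set.Ico (0 : ℝ) 1)
    (hout : ∃ p ∈ Set.Ico (0 : ℝ) 1, ¬ arcMem l₁ r₁ p) (h : arcSubset l₂ r₂ l₁ r₁)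
    (hl : arcMem l₁ r₁ l₂) : arcMem l₂ r₁ r₂ := by
  obtain ⟨p, hp, hp₁⟩ := hout
  by_contra hr
  have hr₂₁ : arcMem l₁ r₁ r₂ := h r₂ hr₂ (arcMem_right _ _)
  exact hp₁ (h p hp (arcMem_of_not_arcMem_of_not_arcMem hl hr₂₁ hr hp₁))

lemma cycBtw.arcMem {a b c : ℝ} (h : cycBtw a b c) : arcMem a c b := by
  unfold cycBtw _root_.arcMem at *; grind

lemma cycBtw.left_ne_right {a b c : ℝ} (h : cycBtw a b c) : a ≠ c := by
  unfold cycBtw at h; grind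

lemma cycBtw.rotate {a b c : ℝ} (h : cycBtw a b c) : cycBtw b c a := by
  unfold cycBtw at *; grind

end Arc

namespace LoopGraph

variable {V : Type} {G : LoopGraph V} {l r : V → ℝ} {x y z : V}

lemma Overlaps.symm (h : G.Overlaps x y) : G.Overlaps y x :=
  ⟨G.symm _ _ h.1, h.2.2, h.2.1⟩

lemma Overlaps.ne (h : G.Overlaps x y) : x ≠ y := by
  rintro rfl
  exact h.2.1 subset_rfl

lemma AvoidsEdge.swap (h : G.AvoidsEdge z x y) : G.AvoidsEdge z y x :=
  ⟨h.2.1, h.1, fun hy hx hxy => h.2.2 hx hy hxy.symm⟩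

lemma nbhd_subset_or_of_not_overlaps (h : G.Adj x y) (hn : ¬ G.Overlaps x y) :
    G.nbhd x ⊆ G.nbhd y ∨ G.nbhd y ⊆ G.nbhd x := by
  unfold Overlaps at hn
  tauto

namespace IsCARep

lemma left_ne_right (hrep : G.IsCARep l r) (x y : V) : l x ≠ r y := fun e =>
  Sum.inl_ne_inr (hrep.2.2.1 (a₁ := .inl x) (a₂ := .inr y) e)

lemma left_injective (hrep : G.IsCARep l r) : Function.Injective l := fun x y e =>
  Sum.inl_injective (hrep.2.2.1 (a₁ := .inl x) (a₂ := .inl y) e)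

lemma exists_not_arcMem (hrep : G.IsCARep l r) (x : V) :
    ∃ p ∈ Set.Ico (0 : ℝ) 1, ¬ arcMem (l x) (r x) p :=
  _root_.exists_not_arcMem (hrep.1 x) (hrep.2.1 x) (hrep.left_ne_right x x)

lemma adj_of_arcMem_left (hrep : G.IsCARep l r) (h : arcMem (l x) (r x) (l y)) : G.Adj x y :=
  (hrep.2.2.2 x y).mpr ⟨l y, hrep.1 y, h, arcMem_left _ _⟩

end IsCARep

namespace IsNormalizedRep

lemma arcSubset_of_nbhd_subset (hrep : G.IsNormalizedRep l r) (hxy : G.Adj x y) (hne : x ≠ y)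
    (h : G.nbhd y ⊆ G.nbhd x) : arcSubset (l y) (r y) (l x) (r x) :=
  ((hrep.2 x y hxy hne).1.mpr h).1

lemma not_arcSubset_of_overlaps (hrep : G.IsNormalizedRep l r) (h : G.Overlaps x y) :
    ¬ arcSubset (l y) (r y) (l x) (r x) := by
  intro hyx
  have hxy : arcSubset (l x) (r x) (l y) (r y) :=
    not_not.mp fun hn => h.2.2 ((hrep.2 x y h.1 h.ne).1.mp ⟨hyx, hn⟩)
  exact h.ne <| hrep.1.left_injective <| left_eq_of_arcSubset_of_arcSubset (hrep.1.1 x)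
    (hrep.1.2.1 x) (hrep.1.1 y) (hrep.1.left_ne_right x x) hxy hyx

lemma not_nbhd_subset_of_arcMem_left (hrep : G.IsNormalizedRep l r) (hne : x ≠ y)
    (h : arcMem (l x) (r x) (l y)) : ¬ G.nbhd x ⊆ G.nbhd y := by
  intro hxy
  have hS : arcSubset (l x) (r x) (l y) (r y) :=
    hrep.arcSubset_of_nbhd_subset (G.symm _ _ (hrep.1.adj_of_arcMem_left h)) hne.symm hxy
  have hlx : arcMem (l y) (r y) (l x) := hS (l x) (hrep.1.1 x) (arcMem_left _ _)
  obtain ⟨p, hp, hpy⟩ := hrep.1.exists_not_arcMem y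
  rcases arcMem_or_arcMem_swap (hrep.1.left_injective.ne hne) p with hp' | hp'
  · exact hpy (hS p hp (h.left_subarc hp'))
  · exact hpy (hlx.left_subarc hp')

lemma arcMem_right_of_overlaps (hrep : G.IsNormalizedRep l r) (h : G.Overlaps z x)
    (hz : arcMem (l x) (r x) (l z)) : arcMem (l z) (r z) (r x) := by
  have hn := hrep.not_arcSubset_of_overlaps h.symm
  simp only [arcSubset, not_forall] at hn
  obtain ⟨t, ht, htz, htx⟩ := hn
  exact htz.left_subarc (hz.right_mem_of_not_arcMem htx)

lemma not_avoidsEdge_of_cycBtw (hrep : G.IsNormalizedRep l r)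
    (hbtw : cycBtw (l x) (l z) (l y)) (hy : arcMem (l x) (r x) (l y)) :
    ¬ G.AvoidsEdge z x y := by
  rintro ⟨hzx, hzy, hzxy⟩
  have hxy : G.Adj x y := hrep.1.adj_of_arcMem_left hy
  have hz : arcMem (l x) (r x) (l z) := hy.left_subarc hbtw.arcMem
  have hOzx : G.Overlaps z x := hzx (G.symm _ _ (hrep.1.adj_of_arcMem_left hz))
  have hrx : arcMem (l z) (r z) (r x) := hrep.arcMem_right_of_overlaps hOzx hz
  have hy' : arcMem (l z) (r x) (l y) := hy.shift_left hbtw.arcMem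
  have hOzy : G.Overlaps z y := hzy (hrep.1.adj_of_arcMem_left (hrx.left_subarc hy'))
  have hne : x ≠ y := fun e => hbtw.left_ne_right (congrArg l e)
  rcases nbhd_subset_or_of_not_overlaps hxy (hzxy hOzx hOzy) with h | h
  · exact hrep.not_nbhd_subset_of_arcMem_left hne hy h
  · have hS := hrep.arcSubset_of_nbhd_subset hxy hne h
    have hry : arcMem (l y) (r x) (r y) :=
      arcMem_of_arcSubset_of_arcMem_left (hrep.1.2.1 y) (hrep.1.exists_not_arcMem x) hS hy
    exact hrep.not_arcSubset_of_overlaps hOzy fun t _ ht =>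
      hrx.left_subarc (hy'.right_subarc (hry.left_subarc ht))

end IsNormalizedRep

end LoopGraph

theorem normalizedRep_not_both_avoid_general
    {V : Type} (G : LoopGraph V) (l r : V → ℝ)
    (hrep : G.IsNormalizedRep l r) (x y z w : V) (hxy : G.Adj x y)
    (hord : cyc4 (l x) (l z) (l y) (l w)) :
    ¬ G.AvoidsEdge z x y ∨ ¬ G.AvoidsEdge w x y := by
  obtain ⟨t, -, htx, hty⟩ := (hrep.1.2.2.2 x y).mp hxy
  rcases arcMem_left_or_arcMem_left_of_arcMem htx hty with h | h
  · exact Or.inl (hrep.not_avoidsEdge_of_cycBtw hord.1 h)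
  · exact Or.inr fun hw => hrep.not_avoidsEdge_of_cycBtw hord.2.rotate h hw.swap

/-- In a normalized circular-arc representation of `G`, if `xy` is an
edge and the left endpoints occur in clockwise circular order `l x < l z < l y < l w`,
then at least one of `z`, `w` does not avoid the edge `xy`. -/
theorem normalizedRep_not_both_avoid
    {V : Type} [Fintype V] (G : LoopGraph V) (l r : V → ℝ)
    (hrep : G.IsNormalizedRep l r) (x y z w : V) (hxy : G.Adj x y)
    (hord : cyc4 (l x) (l z) (l y) (l w)) :
    ¬ G.AvoidsEdge z x y ∨ ¬ G.AvoidsEdge w x y :=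
  normalizedRep_not_both_avoid_general G l r hrep x y z w hxy hord
end

section
/- Let G be a finite graph (with a loop at every vertex) having no universal vertices and no true twins, and let G' be a circular completion of G. Then: (1) G' has no universal vertices and no true twins; (2) at least one vertex of every circular pair of G' belongs to V(G); (3) |V(G')| ≥ 2|V(G)| − |S|, where S is the set of circularly-paired vertices of G. -/
namespace LoopGraph

variable {V W : Type}

/-- Restriction of a loop graph to a subtype. -/
def restrict (H : LoopGraph W) (P : W → Prop) : LoopGraph {w // P w} where
  Adj a b := H.Adj a b
  symm _ _ h := H.symm _ _ h
  refl _ := H.refl _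

theorem spanningPair_symm {H : LoopGraph W} {a b : W} (h : H.SpanningPair a b) :
    H.SpanningPair b a := ⟨h.2, h.1⟩

theorem circularPair_symm {H : LoopGraph W} {a b : W} (h : H.CircularPair a b) :
    H.CircularPair b a := ⟨spanningPair_symm h.1, fun hab => h.2 (H.symm _ _ hab)⟩

theorem overlaps_iff {H : LoopGraph W} {u v : W} :
    H.Overlaps u v ↔ H.Adj u v ∧ ¬ H.InclusionEdge u v := by
  unfold Overlaps InclusionEdge; tauto

theorem circularPair_restrict {H : LoopGraph W} {P : W → Prop} {a b : W}
    (h : H.CircularPair a b) (ha : P a) (hb : P b) :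
    (H.restrict P).CircularPair ⟨a, ha⟩ ⟨b, hb⟩ := by
  refine ⟨⟨fun x hx => fun y hy => ?_, fun x hx => fun y hy => ?_⟩, h.2⟩
  · exact h.1.1 x.1 hx hy
  · exact h.1.2 x.1 hx hy

/-- If two vertices have a common circular partner, they have the same
closed neighbourhood. -/
theorem circularPair_common {H : LoopGraph W} {a b c : W}
    (hac : H.CircularPair a c) (hbc : H.CircularPair b c) :
    H.nbhd a = H.nbhd b := by
  apply Set.Subset.antisymm
  · exact hbc.1.1 a (fun h => hac.2 (H.symm _ _ h))
  · exact hac.1.1 b (fun h => hbc.2 (H.symm _ _ h))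

/-- Deleting vertices outside the image of the embedding preserves the
induced embedding and the edge types. -/
theorem restrict_preserves (G : LoopGraph V) (H : LoopGraph W) (f : V → W)
    (P : W → Prop) (hP : ∀ v, P (f v))
    (hemb : G.InducedEmb H f) (hty : G.SameEdgeTypes H f) :
    G.InducedEmb (H.restrict P) (fun v => ⟨f v, hP v⟩) ∧
    G.SameEdgeTypes (H.restrict P) (fun v => ⟨f v, hP v⟩) := by
  set H' := H.restrict P with hH'
  set f' : V → {w // P w} := fun v => ⟨f v, hP v⟩ with hf'
  have hadj : ∀ u v : V, G.Adj u v ↔ H'.Adj (f' u) (f' v) := fun u v => hemb.2 u v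
  have hemb' : G.InducedEmb H' f' :=
    ⟨fun u v h => hemb.1 (congrArg Subtype.val h), hadj⟩
  have h3 : ∀ u v : V, (H'.nbhd (f' u) ⊆ H'.nbhd (f' v)) → G.nbhd u ⊆ G.nbhd v := by
    intro u v hsub x hx
    exact (hadj v x).mpr (hsub (show H'.Adj (f' u) (f' x) from (hadj u x).mp hx))
  have h2 : ∀ u v : V, (H.nbhd (f u) ⊆ H.nbhd (f v)) →
      H'.nbhd (f' u) ⊆ H'.nbhd (f' v) := by
    intro u v hsub x hx
    exact hsub hx
  have hIncl : ∀ u v : V, G.Adj u v →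
      (G.InclusionEdge u v ↔ H'.InclusionEdge (f' u) (f' v)) := by
    intro u v huv
    constructor
    · intro hG
      obtain ⟨_, hor⟩ := ((hty u v huv).1).mp hG
      exact ⟨(hadj u v).mp huv, hor.elim (fun h => Or.inl (h2 u v h))
        (fun h => Or.inr (h2 v u h))⟩
    · intro ⟨_, hor⟩
      exact ⟨huv, hor.elim (fun h => Or.inl (h3 u v h)) (fun h => Or.inr (h3 v u h))⟩
  have hSpanGH' : ∀ u v : V, H.SpanningPair (f u) (f v) →
      H'.SpanningPair (f' u) (f' v) := by
    intro u v ⟨hs1, hs2⟩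
    exact ⟨fun x hx => fun y hy => hs1 x.1 hx hy, fun x hx => fun y hy => hs2 x.1 hx hy⟩
  have hSpanH'G : ∀ u v : V, H'.SpanningPair (f' u) (f' v) → G.SpanningPair u v := by
    intro u v ⟨hs1, hs2⟩
    constructor
    · intro x hx y hy
      have hx' : ¬ H'.Adj (f' v) (f' x) := fun h => hx ((hadj v x).mpr h)
      exact (hadj u y).mpr (hs1 (f' x) hx' (show H'.Adj (f' x) (f' y) from (hadj x y).mp hy))
    · intro x hx y hy
      have hx' : ¬ H'.Adj (f' u) (f' x) := fun h => hx ((hadj u x).mpr h)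
      exact (hadj v y).mpr (hs2 (f' x) hx' (show H'.Adj (f' x) (f' y) from (hadj x y).mp hy))
  refine ⟨hemb', fun u v huv => ?_⟩
  have hadj' : H'.Adj (f' u) (f' v) := (hadj u v).mp huv
  have iIncl := hIncl u v huv
  have oIff : G.Overlaps u v ↔ H'.Overlaps (f' u) (f' v) := by
    rw [overlaps_iff, overlaps_iff]
    constructor
    · intro ⟨_, h⟩; exact ⟨hadj', fun h' => h (iIncl.mpr h')⟩
    · intro ⟨_, h⟩; exact ⟨huv, fun h' => h (iIncl.mp h')⟩
  refine ⟨iIncl, ?_, ?_⟩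
  · constructor
    · intro ⟨hov, hns⟩
      exact ⟨oIff.mp hov, fun hsp' => hns (hSpanH'G u v hsp')⟩
    · intro ⟨hov', hns'⟩
      refine ⟨oIff.mpr hov', fun hsp => ?_⟩
      exact hns' (hSpanGH' u v (((hty u v huv).2.2).mp ⟨oIff.mpr hov', hsp⟩).2)
  · constructor
    · intro ⟨hov, hsp⟩
      exact ⟨oIff.mp hov, hSpanGH' u v (((hty u v huv).2.2).mp ⟨hov, hsp⟩).2⟩
    · intro ⟨hov', hsp'⟩
      exact ⟨oIff.mpr hov', hSpanH'G u v hsp'⟩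

end LoopGraph

/-- Properties of a circular completion `G'` of `G`:
(1) no universal vertices or true twins; (2) every circular pair of `G'` meets `V(G)`;
(3) `|V(G')| ≥ 2|V(G)| − |S|` where `S` is the set of circularly-paired vertices of `G`. -/
theorem circularCompletion_properties
    {V W : Type} [Fintype V] (G : LoopGraph V)
    (hu : ∀ u, ¬ G.Universal u) (ht : ∀ a b, ¬ G.TrueTwins a b)
    (H : LoopGraph W) (f : V → W) (hcomp : G.IsCircularCompletion H f) :
    (∀ w, ¬ H.Universal w) ∧ (∀ a b, ¬ H.TrueTwins a b) ∧
    (∀ a b, H.CircularPair a b → a ∈ Set.range f ∨ b ∈ Set.range f) ∧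
    2 * Nat.card V - Set.ncard {u : V | ∃ v, G.CircularPair u v} ≤ Nat.card W := by
  classical
  obtain ⟨hfinW, hemb, hty, hcp, hmin⟩ := hcomp
  haveI : Finite W := hfinW
  haveI := Fintype.ofFinite W
  -- Part 1a: no universal vertices
  have huniv : ∀ w, ¬ H.Universal w := by
    intro w hw
    obtain ⟨v, _, hna⟩ := hcp w
    exact hna (hw v)
  -- Deletion tool: deleting vertices outside the image that keeps the graph
  -- circularly paired contradicts minimality.
  have hdel : ∀ (P : W → Prop), (∀ v, P (f v)) → ∀ a : W, ¬ P a →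
      (H.restrict P).CircularlyPaired → False := by
    intro P hP a hPa hcp'
    obtain ⟨hemb', hty'⟩ := LoopGraph.restrict_preserves G H f P hP hemb hty
    have hle := hmin {w // P w} (H.restrict P) _ inferInstance hemb' hty' hcp'
    have hlt : Fintype.card {w // P w} < Fintype.card W := by
      apply Fintype.card_lt_of_injective_of_notMem Subtype.val Subtype.coe_injective (b := a)
      rintro ⟨⟨x, hx⟩, rfl⟩
      exact hPa hx
    rw [Nat.card_eq_fintype_card, Nat.card_eq_fintype_card] at hle
    omega
  -- Part 1b: no true twins
  have htwinAux : ∀ c d, H.TrueTwins c d → d ∉ Set.range f → False := by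
    intro c d htw hdr
    obtain ⟨hcd, hnb⟩ := htw
    have hAdjIff : ∀ x, H.Adj c x ↔ H.Adj d x := fun x => Set.ext_iff.mp hnb x
    refine hdel (fun w => w ≠ d) (fun v' h => hdr ⟨v', h⟩) d (fun h => h rfl) ?_
    rintro ⟨x, hx⟩
    obtain ⟨y, hy⟩ := hcp x
    by_cases hyd : y = d
    · subst hyd
      have hxc : H.CircularPair x c := by
        refine ⟨⟨fun t htc => ?_, fun t htx => ?_⟩, fun hxc => ?_⟩
        · exact hy.1.1 t (fun h => htc ((hAdjIff t).mpr h))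
        · rw [hnb]; exact hy.1.2 t htx
        · exact hy.2 (H.symm _ _ ((hAdjIff x).mp (H.symm _ _ hxc)))
      refine ⟨⟨c, hcd⟩, ?_⟩
      exact LoopGraph.circularPair_restrict hxc hx hcd
    · refine ⟨⟨y, hyd⟩, ?_⟩
      exact LoopGraph.circularPair_restrict hy hx hyd
  have htwin : ∀ a b, ¬ H.TrueTwins a b := by
    intro c d htw
    by_cases hdr : d ∈ Set.range f
    · by_cases hcr : c ∈ Set.range f
      · obtain ⟨u, rfl⟩ := hcr
        obtain ⟨v, rfl⟩ := hdr
        have hAdjIff : ∀ x, H.Adj (f u) x ↔ H.Adj (f v) x :=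
          fun x => Set.ext_iff.mp htw.2 x
        refine ht u v ⟨fun h => htw.1 (congrArg f h), Set.ext fun x => ?_⟩
        constructor
        · intro hx
          exact (hemb.2 v x).mpr ((hAdjIff (f x)).mp ((hemb.2 u x).mp hx))
        · intro hx
          exact (hemb.2 u x).mpr ((hAdjIff (f x)).mpr ((hemb.2 v x).mp hx))
      · exact htwinAux d c ⟨Ne.symm htw.1, htw.2.symm⟩ hcr
    · exact htwinAux c d htw hdr
  -- Part 2: each circular pair of H meets the image of f
  have hpair : ∀ a b, H.CircularPair a b → a ∈ Set.range f ∨ b ∈ Set.range f := by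
    intro a b hab
    by_contra hcon
    push_neg at hcon
    obtain ⟨har, hbr⟩ := hcon
    refine hdel (fun w => w ≠ a ∧ w ≠ b)
      (fun v' => ⟨fun h => har ⟨v', h⟩, fun h => hbr ⟨v', h⟩⟩)
      a (fun h => h.1 rfl) ?_
    rintro ⟨x, hxa, hxb⟩
    obtain ⟨y, hy⟩ := hcp x
    have hya : y ≠ a := by
      intro h; subst h
      exact htwin x b ⟨hxb, LoopGraph.circularPair_common hy (LoopGraph.circularPair_symm hab)⟩
    have hyb : y ≠ b := by
      intro h; subst h
      exact htwin x a ⟨hxa, LoopGraph.circularPair_common hy hab⟩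
    refine ⟨⟨y, hya, hyb⟩, ?_⟩
    exact LoopGraph.circularPair_restrict hy ⟨hxa, hxb⟩ ⟨hya, hyb⟩
  -- Part 3: the counting bound
  refine ⟨huniv, htwin, hpair, ?_⟩
  set S : Set V := {u : V | ∃ v, G.CircularPair u v} with hS
  have hpartner : ∀ u : V, u ∉ S → ∀ c, H.CircularPair (f u) c → c ∉ Set.range f := by
    rintro u hu c hc ⟨w, rfl⟩
    apply hu
    refine ⟨w, ⟨⟨fun x hx => fun y hy => ?_, fun x hx => fun y hy => ?_⟩,
      fun h => hc.2 ((hemb.2 u w).mp h)⟩⟩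
    · exact (hemb.2 u y).mpr
        (hc.1.1 (f x) (fun h => hx ((hemb.2 w x).mpr h)) ((hemb.2 x y).mp hy))
    · exact (hemb.2 w y).mpr
        (hc.1.2 (f x) (fun h => hx ((hemb.2 u x).mpr h)) ((hemb.2 x y).mp hy))
  let p : V → W := fun v => Classical.choose (hcp (f v))
  have hp : ∀ v, H.CircularPair (f v) (p v) := fun v => Classical.choose_spec (hcp (f v))
  let g : V ⊕ ↥(Sᶜ) → W := Sum.elim f (fun v => p v.1)
  have hginj : Function.Injective g := by
    rintro (u | u) (v | v) h
    · exact congrArg Sum.inl (hemb.1 h)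
    · exact absurd ⟨u, h⟩ (hpartner v.1 v.2 (p v.1) (hp v.1))
    · exact absurd ⟨v, h.symm⟩ (hpartner u.1 u.2 (p u.1) (hp u.1))
    · have h' : p u.1 = p v.1 := h
      have h1 := hp u.1
      rw [h'] at h1
      have hfe : f u.1 = f v.1 := by
        by_contra hne
        exact htwin (f u.1) (f v.1) ⟨hne, LoopGraph.circularPair_common h1 (hp v.1)⟩
      exact congrArg Sum.inr (Subtype.ext (hemb.1 hfe))
  have hcard := Nat.card_le_card_of_injective g hginj
  rw [Nat.card_sum] at hcard
  have h1 : Nat.card ↥(Sᶜ) = (Sᶜ).ncard := Nat.card_coe_set_eq _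
  have h2 : S.ncard + (Sᶜ).ncard = Nat.card V := Set.ncard_add_ncard_compl S
  rw [h1] at hcard
  omega
end

section
/- Let G be a finite graph (with a loop at every vertex) having no universal vertices and no true twins, and let S denote the set of circularly-paired vertices of G. Then G has a circular completion G' with |V(G')| = 2|V(G)| − |S|. -/
namespace LoopGraph

variable {V : Type}



lemma SpanningPair.comm {G : LoopGraph V} {u v : V} (h : G.SpanningPair u v) :
    G.SpanningPair v u := ⟨h.2, h.1⟩

lemma spanningPair_upgrade {G : LoopGraph V} {u s t : V}
    (hs : G.SpanningPair u s) (h : G.nbhd u ⊆ G.nbhd t) : G.SpanningPair t s :=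
  ⟨fun x hx => (hs.1 x hx).trans h, fun y hy => hs.2 y fun ha => hy (h ha)⟩

lemma spanningPair_universal {G : LoopGraph V} {u s : V}
    (hs : G.SpanningPair u s) (h : G.nbhd u ⊆ G.nbhd s) : G.Universal s := fun y => by
  by_cases ha : G.Adj u y
  · exact h ha
  · exact hs.2 y ha (G.refl y)

def Tset (G : LoopGraph V) : Set V := {u | ¬ ∃ v, G.CircularPair u v}

def ext (G : LoopGraph V) : LoopGraph (V ⊕ ↥G.Tset) where
  Adj a b :=
    match a, b with
    | .inl x, .inl y => G.Adj x y
    | .inl x, .inr u => ¬ G.nbhd x ⊆ G.nbhd u.1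
    | .inr u, .inl x => ¬ G.nbhd x ⊆ G.nbhd u.1
    | .inr u, .inr v => u = v ∨ ¬ G.SpanningPair u.1 v.1
  symm a b h := by
    match a, b with
    | .inl x, .inl y => exact G.symm x y h
    | .inl x, .inr u => exact h
    | .inr u, .inl x => exact h
    | .inr u, .inr v => exact h.imp Eq.symm (fun hn hs => hn hs.comm)
  refl a := by
    match a with
    | .inl x => exact G.refl x
    | .inr u => exact Or.inl rfl

variable {G : LoopGraph V}

lemma ext_adj_ll {x y : V} : G.ext.Adj (.inl x) (.inl y) ↔ G.Adj x y := Iff.rfl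
lemma ext_adj_lr {x : V} {u : ↥G.Tset} :
    G.ext.Adj (.inl x) (.inr u) ↔ ¬ G.nbhd x ⊆ G.nbhd u.1 := Iff.rfl
lemma ext_adj_rl {x : V} {u : ↥G.Tset} :
    G.ext.Adj (.inr u) (.inl x) ↔ ¬ G.nbhd x ⊆ G.nbhd u.1 := Iff.rfl
lemma ext_adj_rr {u v : ↥G.Tset} :
    G.ext.Adj (.inr u) (.inr v) ↔ (u = v ∨ ¬ G.SpanningPair u.1 v.1) := Iff.rfl

lemma ext_nbhd_subset {u v : V} :
    G.ext.nbhd (.inl u) ⊆ G.ext.nbhd (.inl v) ↔ G.nbhd u ⊆ G.nbhd v := by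
  constructor
  · intro h x hx
    exact h (show Sum.inl x ∈ G.ext.nbhd (Sum.inl u) from hx)
  · intro h w hw
    match w with
    | .inl x => exact h hw
    | .inr t => exact fun hvt => hw (h.trans hvt)

lemma ext_spanning_half (hu : ∀ u, ¬ G.Universal u) {u v : V} (hs : G.SpanningPair u v) :
    ∀ w, ¬ G.ext.Adj (.inl v) w → G.ext.nbhd w ⊆ G.ext.nbhd (.inl u) := by
  intro w hw
  match w with
  | .inl x =>
      exact ext_nbhd_subset.mpr (hs.1 x hw)
  | .inr t =>
      have hvt : G.nbhd v ⊆ G.nbhd t.1 := not_not.mp hw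
      intro w' hw'
      match w' with
      | .inl x =>
          by_contra hux
          exact hw' ((hs.2 x hux).trans hvt)
      | .inr s =>
          rcases hw' with rfl | hns
          · intro hus
            exact hu t.1 (spanningPair_universal
              ((spanningPair_upgrade hs.comm hvt).comm) hus)
          · intro hus
            have h1 : G.SpanningPair t.1 u := spanningPair_upgrade hs.comm hvt
            have h2 : G.SpanningPair s.1 t.1 := spanningPair_upgrade h1.comm hus
            exact hns h2.comm

lemma ext_spanning (hu : ∀ u, ¬ G.Universal u) {u v : V} :
    G.ext.SpanningPair (.inl u) (.inl v) ↔ G.SpanningPair u v := by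
  constructor
  · intro h
    refine ⟨fun x hx => ?_, fun y hy => ?_⟩
    · exact ext_nbhd_subset.mp (h.1 (Sum.inl x) hx)
    · exact ext_nbhd_subset.mp (h.2 (Sum.inl y) hy)
  · intro hs
    exact ⟨ext_spanning_half hu hs, ext_spanning_half hu hs.comm⟩

lemma ext_spanning_inr (hu : ∀ u, ¬ G.Universal u) (u : ↥G.Tset) :
    G.ext.SpanningPair (.inl u.1) (.inr u) := by
  constructor
  · intro w hw
    match w with
    | .inl x =>
        exact ext_nbhd_subset.mpr (not_not.mp hw)
    | .inr s =>
        rw [ext_adj_rr] at hw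
        push_neg at hw
        obtain ⟨hne, hsp⟩ := hw
        intro w' hw'
        match w' with
        | .inl x =>
            by_contra hux
            exact hw' (hsp.2 x hux)
        | .inr t =>
            intro hut
            rcases hw' with h1 | hns
            · subst h1
              exact hu s.1 (spanningPair_universal hsp hut)
            · exact hns (spanningPair_upgrade hsp hut).comm
  · intro w hw
    match w with
    | .inl y =>
        intro w' hw'
        match w' with
        | .inl x =>
            intro hxu
            exact hw (hxu (G.symm y x hw'))
        | .inr s =>
            refine (em (u = s)).elim Or.inl (fun he => Or.inr fun hsp => ?_)
            exact hw' (hsp.2 y hw)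
    | .inr t =>
        have hut : G.nbhd u.1 ⊆ G.nbhd t.1 := not_not.mp hw
        intro w' hw'
        match w' with
        | .inl x =>
            exact fun hxu => hw' (hxu.trans hut)
        | .inr s =>
            refine (em (u = s)).elim Or.inl (fun he => Or.inr fun hsp => ?_)
            rcases hw' with h1 | hns
            · subst h1
              exact hu t.1 (spanningPair_universal hsp hut)
            · exact hns (spanningPair_upgrade hsp hut)

lemma ext_overlaps {u v : V} :
    G.ext.Overlaps (.inl u) (.inl v) ↔ G.Overlaps u v := by
  unfold Overlaps
  rw [ext_adj_ll, ext_nbhd_subset, ext_nbhd_subset]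

lemma ext_inclusion {u v : V} :
    G.ext.InclusionEdge (.inl u) (.inl v) ↔ G.InclusionEdge u v := by
  unfold InclusionEdge
  rw [ext_adj_ll, ext_nbhd_subset, ext_nbhd_subset]

lemma ext_sameEdgeTypes (hu : ∀ u, ¬ G.Universal u) :
    G.SameEdgeTypes G.ext Sum.inl := by
  intro u v _
  refine ⟨ext_inclusion.symm, ?_, ?_⟩
  · unfold OneOverlapEdge
    rw [ext_overlaps, ext_spanning hu]
  · unfold TwoOverlapEdge
    rw [ext_overlaps, ext_spanning hu]

lemma ext_circ (hu : ∀ u, ¬ G.Universal u) : G.ext.CircularlyPaired := by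
  intro w
  match w with
  | .inl u =>
      by_cases h : ∃ v, G.CircularPair u v
      · obtain ⟨v, hv⟩ := h
        exact ⟨.inl v, (ext_spanning hu).mpr hv.1, fun ha => hv.2 ha⟩
      · exact ⟨.inr ⟨u, h⟩, ext_spanning_inr hu ⟨u, h⟩, fun ha => ha (fun _ h => h)⟩
  | .inr u =>
      exact ⟨.inl u.1, (ext_spanning_inr hu u).comm, fun ha => ha (fun _ h => h)⟩

lemma circularPair_pullback {W : Type} {H : LoopGraph W} {f : V → W}
    (he : G.InducedEmb H f) {a b : V} (h : H.CircularPair (f a) (f b)) :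
    G.CircularPair a b := by
  refine ⟨⟨fun x hx => ?_, fun y hy => ?_⟩, fun ha => h.2 ((he.2 a b).mp ha)⟩
  · intro t htx
    exact (he.2 a t).mpr
      (h.1.1 (f x) (fun hb => hx ((he.2 b x).mpr hb)) ((he.2 x t).mp htx))
  · intro t hty
    exact (he.2 b t).mpr
      (h.1.2 (f y) (fun hb => hy ((he.2 a y).mpr hb)) ((he.2 y t).mp hty))

lemma partner_unique {W : Type} {H : LoopGraph W} {w a b : W}
    (ha : H.CircularPair a w) (hb : H.CircularPair b w) : H.nbhd a ⊆ H.nbhd b :=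
  hb.1.1 a (fun h => ha.2 (H.symm w a h))

lemma ext_minimal (ht : ∀ u v, ¬ G.TrueTwins u v)
    (W' : Type) (H' : LoopGraph W') (f' : V → W') (hf : Finite W')
    (he : G.InducedEmb H' f') (hcirc : H'.CircularlyPaired) :
    Nat.card (V ⊕ ↥G.Tset) ≤ Nat.card W' := by
  classical
  have hg : ∀ u : ↥G.Tset, ∃ w, H'.CircularPair (f' u.1) w := fun u => hcirc (f' u.1)
  choose g hgp using hg
  have hdisj : ∀ (u : V) (t : ↥G.Tset), f' u ≠ g t := by
    intro u t h
    have h1 := hgp t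
    rw [← h] at h1
    exact t.2 ⟨u, circularPair_pullback he h1⟩
  have hginj : Function.Injective g := by
    intro a b hab
    have h1 := hgp a
    have h2 := hgp b
    rw [hab] at h1
    have hsub : G.nbhd a.1 = G.nbhd b.1 := by
      apply Set.Subset.antisymm
      · intro t htx
        exact (he.2 b.1 t).mpr (partner_unique h1 h2 ((he.2 a.1 t).mp htx))
      · intro t htx
        exact (he.2 a.1 t).mpr (partner_unique h2 h1 ((he.2 b.1 t).mp htx))
    by_contra hne
    exact ht a.1 b.1 ⟨fun h => hne (Subtype.ext h), hsub⟩
  have hinj : Function.Injective (Sum.elim f' g) := by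
    intro a b hab
    match a, b with
    | .inl x, .inl y => exact congrArg Sum.inl (he.1 hab)
    | .inl x, .inr t => exact absurd hab (hdisj x t)
    | .inr t, .inl x => exact absurd hab.symm (hdisj x t)
    | .inr s, .inr t => exact congrArg Sum.inr (hginj hab)
  exact Nat.card_le_card_of_injective _ hinj

end LoopGraph


/-- Every finite graph with no universal vertices and no true twins has a
circular completion `G'` with `|V(G')| = 2|V(G)| − |S|`, where `S` is the set of
circularly-paired vertices of `G`. -/
theorem circularCompletion_exists
    {V : Type} [Fintype V] (G : LoopGraph V)
    (hu : ∀ u, ¬ G.Universal u) (ht : ∀ u v, ¬ G.TrueTwins u v) :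
    ∃ (W : Type) (H : LoopGraph W) (f : V → W), G.IsCircularCompletion H f ∧
      Nat.card W = 2 * Nat.card V - Set.ncard {u : V | ∃ v, G.CircularPair u v} := by
  
  classical
  refine ⟨V ⊕ ↥G.Tset, G.ext, Sum.inl,
    ⟨inferInstance, ⟨Sum.inl_injective, fun u v => Iff.rfl⟩,
      LoopGraph.ext_sameEdgeTypes hu, LoopGraph.ext_circ hu,
      fun W' H' f' hf' he' _ hc' => LoopGraph.ext_minimal ht W' H' f' hf' he' hc'⟩, ?_⟩
  have h1 : Nat.card (V ⊕ ↥G.Tset) = Nat.card V + Nat.card ↥G.Tset := Nat.card_sum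
  have h2 : Nat.card ↥G.Tset = G.Tset.ncard := (Nat.card_coe_set_eq _)
  have h3 : G.Tset = {u : V | ∃ v, G.CircularPair u v}ᶜ := rfl
  have h4 : Set.ncard {u : V | ∃ v, G.CircularPair u v} +
      Set.ncard {u : V | ∃ v, G.CircularPair u v}ᶜ = Nat.card V :=
    Set.ncard_add_ncard_compl _
  rw [h1, h2, h3]
  omega
end
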